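/- For a generalized Lawvere metric space X and r ∈ [0,∞], there is a natural bijection between discrete dynamical systems φ: X → ∞ bounded above by r (i.e., |φ♯_x| ≤ r for every point x; equivalently φ factors through r → ∞) and (Σ[0,∞]_≥, 0, ⊕)-enriched cofunctors Φ: X ⇸ B_r, where B_r is the one-object enriched category with hom-set ℕ, addition as composition, and weight |n| = n·r. -/

import Mathlib

open CategoryTheory Limits Opposite MonoidalCategory ENNReal

universe v u

/-- The free product completion of a category. -/
structure FreeProd (C : Type u) [Category.{v} C] where
  ι : Type v
  obj : ι → C

instance FreeProd.category (C : Type u) [Category.{v} C] : Category.{v} (FreeProd C) where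
  Hom X Y := Σ f : Y.ι → X.ι, ∀ j, X.obj (f j) ⟶ Y.obj j
  id X := ⟨fun i => i, fun _ => 𝟙 _⟩
  comp {X Y Z} F G := ⟨fun k => F.1 (G.1 k), fun k => F.2 (G.1 k) ≫ G.2 k⟩
  id_comp F := by obtain ⟨f, g⟩ := F; dsimp; congr 1 <;> simp
  comp_id F := by obtain ⟨f, g⟩ := F; dsimp; congr 1 <;> simp
  assoc F G H := by dsimp; congr 1 <;> simp

/-- The free coproduct completion of a category. -/
structure FreeCoprod (C : Type u) [Category.{v} C] where
  ι : Type v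
  obj : ι → C

instance FreeCoprod.category (C : Type u) [Category.{v} C] : Category.{v} (FreeCoprod C) where
  Hom X Y := Σ f : X.ι → Y.ι, ∀ i, X.obj i ⟶ Y.obj (f i)
  id X := ⟨fun i => i, fun _ => 𝟙 _⟩
  comp {X Y Z} F G := ⟨fun i => G.1 (F.1 i), fun i => F.2 i ≫ G.2 (F.1 i)⟩
  id_comp F := by obtain ⟨f, g⟩ := F; dsimp; congr 1 <;> simp
  comp_id F := by obtain ⟨f, g⟩ := F; dsimp; congr 1 <;> simp
  assoc F G H := by dsimp; congr 1 <;> simp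

/-- The category of polynomials in `C`: the free coproduct completion of the free product
completion of `C`. -/
abbrev SigmaPi (C : Type u) [Category.{v} C] := FreeCoprod (FreeProd C)

/-- The polynomial `∑_{i∈I} ∏_{a∈A_i} c_{i,a}` as an object of `ΣΠC`. -/
def polyObj {C : Type u} [Category.{v} C] (I : Type v) (A : I → Type v)
    (c : ∀ i, A i → C) : SigmaPi C :=
  ⟨I, fun i => ⟨A i, c i⟩⟩

/-- The poset `[0, ∞]` of extended nonnegative reals, ordered by `≤` and viewed as a
category, is monoidal with unit `0` and tensor product `+`. -/
noncomputable instance : MonoidalCategory ℝ≥0∞ where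
  tensorObj a b := a + b
  whiskerLeft a _ _ f := homOfLE (add_le_add_right (leOfHom f) a)
  whiskerRight f b := homOfLE (add_le_add_left (leOfHom f) b)
  tensorHom f g := homOfLE (add_le_add (leOfHom f) (leOfHom g))
  tensorUnit := 0
  associator a b c := eqToIso (add_assoc a b c)
  leftUnitor a := eqToIso (zero_add a)
  rightUnitor a := eqToIso (add_zero a)
  tensorHom_def := by intros; exact Subsingleton.elim _ _
  id_tensorHom_id := by intros; exact Subsingleton.elim _ _
  tensorHom_comp_tensorHom := by intros; exact Subsingleton.elim _ _
  whiskerLeft_id := by intros; exact Subsingleton.elim _ _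
  id_whiskerRight := by intros; exact Subsingleton.elim _ _
  associator_naturality := by intros; exact Subsingleton.elim _ _
  leftUnitor_naturality := by intros; exact Subsingleton.elim _ _
  rightUnitor_naturality := by intros; exact Subsingleton.elim _ _
  pentagon := by intros; exact Subsingleton.elim _ _
  triangle := by intros; exact Subsingleton.elim _ _

/-- A small `(ΣCᵒᵖ, e, ⊙)`-enriched category, presented concretely: a set of objects,
morphisms with source and target, each morphism `f` carrying a weight `|f| ∈ C`; identity
morphisms with identity maps `η_x : |id_x| ⟶ e` in `C`; composition with composite maps
`μ_{f,g} : |gf| ⟶ |f| ⊗ |g|` in `C`; satisfying unitality and associativity coherence. -/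
structure WCat (C : Type u) [Category.{v} C] [MonoidalCategory C] :
    Type (max u (v + 1)) where
  Obj : Type v
  Mor : Type v
  src : Mor → Obj
  tgt : Mor → Obj
  wt : Mor → C
  ide : Obj → Mor
  ide_src : ∀ x, src (ide x) = x
  ide_tgt : ∀ x, tgt (ide x) = x
  cmp : ∀ (f g : Mor), tgt f = src g → Mor
  cmp_src : ∀ f g h, src (cmp f g h) = src f
  cmp_tgt : ∀ f g h, tgt (cmp f g h) = tgt g
  η : ∀ x, wt (ide x) ⟶ 𝟙_ C
  μ : ∀ f g h, wt (cmp f g h) ⟶ wt f ⊗ wt g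
  ide_cmp : ∀ f : Mor, cmp (ide (src f)) f (ide_tgt _) = f
  cmp_ide : ∀ f : Mor, cmp f (ide (tgt f)) ((ide_src _).symm) = f
  cmp_assoc : ∀ (f g h : Mor) (hfg : tgt f = src g) (hgh : tgt g = src h),
    cmp (cmp f g hfg) h (by rw [cmp_tgt]; exact hgh) =
      cmp f (cmp g h hgh) (by rw [cmp_src]; exact hfg)
  unit_left : ∀ f : Mor,
    μ (ide (src f)) f (ide_tgt _) ≫ (η (src f) ▷ wt f) ≫ (λ_ (wt f)).hom =
      eqToHom (congrArg wt (ide_cmp f))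
  unit_right : ∀ f : Mor,
    μ f (ide (tgt f)) ((ide_src _).symm) ≫ (wt f ◁ η (tgt f)) ≫ (ρ_ (wt f)).hom =
      eqToHom (congrArg wt (cmp_ide f))
  mu_assoc : ∀ (f g h : Mor) (hfg : tgt f = src g) (hgh : tgt g = src h),
    μ f (cmp g h hgh) (by rw [cmp_src]; exact hfg) ≫ (wt f ◁ μ g h hgh) =
      eqToHom (congrArg wt (cmp_assoc f g h hfg hgh)).symm ≫
        μ (cmp f g hfg) h (by rw [cmp_tgt]; exact hgh) ≫
        (μ f g hfg ▷ wt h) ≫ (α_ (wt f) (wt g) (wt h)).hom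

/-- A `(ΣCᵒᵖ, e, ⊙)`-enriched cofunctor between small enriched categories, presented
concretely: an object function, lifts of morphisms out of images, and weight maps
`|Φ♯_a f| ⟶ |f|` in `C`, preserving identities and composites compatibly with `η` and `μ`. -/
structure WCof {C : Type u} [Category.{v} C] [MonoidalCategory C] (A B : WCat C) :
    Type (max u v) where
  onObj : A.Obj → B.Obj
  lift : ∀ (a : A.Obj) (f : B.Mor), B.src f = onObj a → A.Mor
  lift_src : ∀ a f h, A.src (lift a f h) = a
  lift_tgt : ∀ a f h, onObj (A.tgt (lift a f h)) = B.tgt f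
  onW : ∀ a f h, A.wt (lift a f h) ⟶ B.wt f
  lift_ide : ∀ a : A.Obj, lift a (B.ide (onObj a)) (B.ide_src _) = A.ide a
  ide_coh : ∀ a : A.Obj,
    onW a (B.ide (onObj a)) (B.ide_src _) ≫ B.η (onObj a) =
      eqToHom (congrArg A.wt (lift_ide a)) ≫ A.η a
  lift_cmp : ∀ (a : A.Obj) (f g : B.Mor) (hf : B.src f = onObj a)
      (hfg : B.tgt f = B.src g),
    lift a (B.cmp f g hfg) (by rw [B.cmp_src]; exact hf) =
      A.cmp (lift a f hf) (lift (A.tgt (lift a f hf)) g (by rw [lift_tgt]; exact hfg.symm))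
        ((lift_src _ _ _).symm)
  cmp_coh : ∀ (a : A.Obj) (f g : B.Mor) (hf : B.src f = onObj a)
      (hfg : B.tgt f = B.src g),
    onW a (B.cmp f g hfg) (by rw [B.cmp_src]; exact hf) ≫ B.μ f g hfg =
      eqToHom (congrArg A.wt (lift_cmp a f g hf hfg)) ≫
        A.μ _ _ ((lift_src _ _ _).symm) ≫
        (onW a f hf ⊗ₘ onW (A.tgt (lift a f hf)) g (by rw [lift_tgt]; exact hfg.symm))


/-- The one-object `(Σ[0,∞]_≥, 0, ⊕)`-enriched category with hom-set `ℕ`, addition as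
composition, and weight `|n| = n · r`. -/
noncomputable def natWeighted (r : ℝ≥0∞) : WCat ℝ≥0∞ where
  Obj := PUnit
  Mor := ℕ
  src _ := PUnit.unit
  tgt _ := PUnit.unit
  wt n := (n : ℝ≥0∞) * r
  ide _ := 0
  ide_src _ := rfl
  ide_tgt _ := rfl
  cmp m n _ := m + n
  cmp_src _ _ _ := rfl
  cmp_tgt _ _ _ := rfl
  η _ := homOfLE (by simp)
  μ m n _ := homOfLE (le_of_eq (by show ((↑(m + n) : ℝ≥0∞)) * r = (↑m : ℝ≥0∞) * r + (↑n : ℝ≥0∞) * r; push_cast; ring))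
  ide_cmp f := Nat.zero_add f
  cmp_ide f := Nat.add_zero f
  cmp_assoc f g h _ _ := Nat.add_assoc f g h
  unit_left _ := Subsingleton.elim _ _
  unit_right _ := Subsingleton.elim _ _
  mu_assoc _ _ _ _ _ := Subsingleton.elim _ _

/-- A generalized Lawvere metric space `X` (a small `(Σ[0,∞]_≥, 0, ⊕)`-enriched category,
i.e. a comonoid in `(ΣΠ[0,∞]_≤, 0, ◁)`), viewed as its underlying polynomial in `[0,∞]_≤`:
positions are points, directions at `x` are the paths out of `x`, and predicates are costs. -/
noncomputable def polyOf (X : WCat ℝ≥0∞) : SigmaPi ℝ≥0∞ :=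
  polyObj X.Obj (fun x => {m : X.Mor // X.src m = x}) (fun _ m => X.wt m.1)

/-- The one-position, one-direction polynomial with predicate `∞`. -/
noncomputable def inftyObj : SigmaPi ℝ≥0∞ :=
  polyObj PUnit (fun _ => PUnit) (fun _ _ => (∞ : ℝ≥0∞))

/-! A cofunctor `X ⇸ B_r` is determined by its lifts of the generator `1 ∈ ℕ`: lifting `n` must
give the `n`-fold composite of those lifts. The lift of `1` at `x` is a path out of `x` of cost at
most `r`, which is exactly a bounded dynamical system. Conversely, by the triangle inequality the
`n`-fold composite of steps of cost at most `r` costs at most `n · r`, which is the weight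
condition of the cofunctor; every other coherence condition holds automatically because `[0, ∞]`
is a poset. -/

namespace WCat

variable {C : Type u} [Category.{v} C] [MonoidalCategory C] (A : WCat C)

lemma cmp_congr {f f' g g' : A.Mor} (hf : f = f') (hg : g = g') (h : A.tgt f = A.src g) :
    A.cmp f g h = A.cmp f' g' (hf ▸ hg ▸ h) := by
  subst hf hg
  rfl

lemma cmp_ide_left {x : A.Obj} {f : A.Mor} (hf : A.src f = x) (h : A.tgt (A.ide x) = A.src f) :
    A.cmp (A.ide x) f h = f := by
  subst hf
  exact A.ide_cmp f

/-- A choice of one path out of every object: the concrete form of a discrete dynamical system. -/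
abbrev PathChoice : Type v := ∀ x : A.Obj, {m : A.Mor // A.src m = x}

variable {A} (step : A.PathChoice)

def iterate : A.Obj → ℕ → A.Mor
  | a, 0 => A.ide a
  | a, n + 1 => A.cmp (iterate a n) (step (A.tgt (iterate a n))).1 (step _).2.symm

lemma src_iterate (a : A.Obj) : ∀ n, A.src (A.iterate step a n) = a
  | 0 => A.ide_src a
  | n + 1 => (A.cmp_src _ _ _).trans (src_iterate a n)

lemma iterate_one (a : A.Obj) : A.iterate step a 1 = (step a).1 :=
  (A.cmp_ide_left ((step _).2.trans (A.ide_tgt a)) _).trans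
    (congrArg (fun z => (step z).1) (A.ide_tgt a))

lemma iterate_add (a : A.Obj) (m : ℕ) : ∀ n, A.iterate step a (m + n) =
    A.cmp (A.iterate step a m) (A.iterate step (A.tgt (A.iterate step a m)) n)
      (src_iterate step _ n).symm
  | 0 => (A.cmp_ide _).symm
  | n + 1 => by
    have ih := iterate_add a m n
    calc A.iterate step a (m + n + 1)
        = A.cmp (A.cmp _ _ _) (step (A.tgt (A.cmp _ _ _))).1 _ :=
          A.cmp_congr ih (congrArg (fun z => (step z).1) (congrArg A.tgt ih)) _
      _ = A.cmp _ (A.cmp _ (step (A.tgt (A.cmp _ _ _))).1 _) _ :=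
          A.cmp_assoc _ _ _ _ ((step _).2.trans (A.cmp_tgt _ _ _)).symm
      _ = _ := A.cmp_congr rfl
          (A.cmp_congr rfl (congrArg (fun z => (step z).1) (A.cmp_tgt _ _ _)) _) _

end WCat

lemma WCat.wt_iterate_le (A : WCat ℝ≥0∞) {r : ℝ≥0∞} {step : A.PathChoice}
    (hstep : ∀ x, A.wt (step x).1 ≤ r) (a : A.Obj) :
    ∀ n : ℕ, A.wt (A.iterate step a n) ≤ n * r
  | 0 => (leOfHom (A.η a)).trans zero_le
  | n + 1 => calc
      A.wt (A.iterate step a (n + 1))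
          ≤ A.wt (A.iterate step a n) + A.wt (step (A.tgt (A.iterate step a n))).1 :=
        leOfHom (A.μ _ _ _)
      _ ≤ n * r + r := add_le_add (A.wt_iterate_le hstep a n) (hstep _)
      _ = (n + 1 : ℕ) * r := by push_cast; ring

/-- The position map and the weight components are forced, `∞` being terminal in `[0, ∞]_≤`. -/
noncomputable def polyOfHomInftyObjEquiv (X : WCat ℝ≥0∞) :
    (polyOf X ⟶ inftyObj) ≃ X.PathChoice where
  toFun φ x := (φ.2 x).1 PUnit.unit
  invFun step := ⟨fun _ => PUnit.unit, fun x => ⟨fun _ => step x, fun _ => homOfLE le_top⟩⟩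
  left_inv φ := by
    obtain ⟨f, g⟩ := φ
    congr 1
  right_inv _ := rfl

namespace WCof

variable {C : Type u} [Category.{v} C] [MonoidalCategory C] [Quiver.IsThin C] {A B : WCat C}

lemma ext {F G : WCof A B} (hObj : F.onObj = G.onObj)
    (hLift : ∀ a f h h', F.lift a f h = G.lift a f h') : F = G := by
  obtain ⟨o, l, _, _, w, _, _, _, _⟩ := F
  obtain ⟨o', l', _, _, w', _, _, _, _⟩ := G
  subst hObj
  obtain rfl : l = l' := funext fun a => funext fun f => funext fun h => hLift a f h h
  obtain rfl : w = w' := funext fun _ => funext fun _ => funext fun _ => Subsingleton.elim _ _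
  rfl

end WCof

section NatWeighted

variable (X : WCat ℝ≥0∞) {r : ℝ≥0∞}

noncomputable def WCof.ofPathChoice (step : X.PathChoice) (hstep : ∀ x, X.wt (step x).1 ≤ r) :
    WCof X (natWeighted r) where
  onObj _ := PUnit.unit
  lift a n _ := X.iterate step a n
  lift_src a n _ := X.src_iterate step a n
  lift_tgt _ _ _ := rfl
  onW a n _ := homOfLE (X.wt_iterate_le hstep a n)
  lift_ide _ := rfl
  ide_coh _ := Subsingleton.elim _ _
  lift_cmp a m n _ _ := X.iterate_add step a m n
  cmp_coh _ _ _ _ _ := Subsingleton.elim _ _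

variable {X}

def WCof.liftOne (Φ : WCof X (natWeighted r)) : X.PathChoice :=
  fun x => ⟨Φ.lift x (1 : ℕ) rfl, Φ.lift_src x (1 : ℕ) rfl⟩

lemma WCof.wt_liftOne_le (Φ : WCof X (natWeighted r)) (x : X.Obj) :
    X.wt (Φ.liftOne x).1 ≤ r :=
  (leOfHom (Φ.onW x (1 : ℕ) rfl)).trans_eq (by simp [natWeighted])

lemma WCof.lift_eq_iterate_liftOne (Φ : WCof X (natWeighted r)) (a : X.Obj) (n : ℕ)
    (h : (natWeighted r).src n = Φ.onObj a) : Φ.lift a n h = X.iterate Φ.liftOne a n := by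
  induction n generalizing a with
  | zero => exact Φ.lift_ide a
  | succ n ih =>
    exact (Φ.lift_cmp a n (1 : ℕ) h rfl).trans
      (X.cmp_congr (ih a h)
        (congrArg (fun z => Φ.lift z (1 : ℕ) rfl) (congrArg X.tgt (ih a h))) _)

variable (X r)

noncomputable def boundedPathChoiceEquivWCof :
    {step : X.PathChoice // ∀ x, X.wt (step x).1 ≤ r} ≃ WCof X (natWeighted r) where
  toFun step := WCof.ofPathChoice X step.1 step.2
  invFun Φ := ⟨Φ.liftOne, Φ.wt_liftOne_le⟩
  left_inv step := Subtype.ext (funext fun x => Subtype.ext (X.iterate_one step.1 x))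
  right_inv Φ := WCof.ext rfl fun a n h _ => (Φ.lift_eq_iterate_liftOne a n h).symm

end NatWeighted

/-- for a generalized Lawvere metric space `X` and `r ∈ [0,∞]`, discrete
dynamical systems `φ : X → ∞` bounded above by `r` (i.e. every chosen step path has cost
at most `r`) are in natural bijection with `(Σ[0,∞]_≥, 0, ⊕)`-enriched cofunctors
`Φ : X ⇸ B_r`, where `B_r` is the one-object enriched category with hom-set `ℕ`,
addition as composition, and weight `|n| = n · r`. -/
theorem bounded_dds_equiv_enriched_cofunctors (X : WCat ℝ≥0∞) (r : ℝ≥0∞) :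
    Nonempty ({φ : polyOf X ⟶ inftyObj // ∀ x : X.Obj, X.wt ((φ.2 x).1 PUnit.unit).1 ≤ r}
      ≃ WCof X (natWeighted r)) :=
  ⟨((polyOfHomInftyObjEquiv X).subtypeEquiv fun _ => Iff.rfl).trans
    (boundedPathChoiceEquivWCof X r)⟩
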